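/- For the column-type elementary enlargement as well, the signature of the symmetrization is preserved: if V is an n × n integer matrix, b ∈ M_{n×1}(ℤ), and W = [[V, b, 0], [0, 0, 1], [0, 0, 0]], then σ(W + Wᵀ) = σ(V + Vᵀ). -/

import Mathlib

open Matrix

/-- The signature of a real symmetric (= Hermitian) matrix: the number of positive
eigenvalues minus the number of negative eigenvalues, counted with multiplicity.
(Defined to be `0` on non-symmetric matrices.) -/
noncomputable def signature {n : Type*} [Fintype n] [DecidableEq n]
    (A : Matrix n n ℝ) : ℤ :=
  if hA : A.IsHermitian then
    ((Finset.univ.filter fun i => 0 < hA.eigenvalues i).card : ℤ) -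
    ((Finset.univ.filter fun i => hA.eigenvalues i < 0).card : ℤ)
  else 0

/-- The column-type elementary enlargement `W = [[V, b, 0], [0, 0, 1], [0, 0, 0]]`. -/
def colEnlarge {n : ℕ} (V : Matrix (Fin n) (Fin n) ℤ) (b : Fin n → ℤ) :
    Matrix (Fin n ⊕ Fin 2) (Fin n ⊕ Fin 2) ℤ :=
  Matrix.fromBlocks V
    (Matrix.of fun (i : Fin n) (j : Fin 2) => if j = 0 then b i else 0)
    0
    !![0, 1; 0, 0]

/-!
Write a vector of `ℝⁿ ⊕ ℝ²` as `(x, y)`. The quadratic form of `W + Wᵀ` is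
`q(x) + 2 y₀ (y₁ + b ⬝ x)`, where `q` is the form of `V + Vᵀ`. The substitution
`(y₀, y₁ + b ⬝ x) = (u₀ + u₁, u₀ - u₁)` turns it into `q(x) + 2 u₀² - 2 u₁²`, so by Sylvester's
law of inertia both the positive and the negative index go up by exactly one. The signature of a
symmetric matrix, defined through its eigenvalues, is the difference of these indices by the
spectral theorem.
-/

open QuadraticMap QuadraticForm

theorem Set.ncard_setOf_sum {α β : Type*} [Finite α] [Finite β] (p : α ⊕ β → Prop) :
    {x | p x}.ncard = {a | p (.inl a)}.ncard + {b | p (.inr b)}.ncard := by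
  simp only [← Nat.card_coe_set_eq]
  exact (Nat.card_congr Equiv.subtypeSum).trans Nat.card_sum

namespace QuadraticMap

variable {R ι κ : Type*} [CommSemiring R] [Fintype ι] [Fintype κ]

def isometryEquivProdWeightedSumSquares (w₁ : ι → R) (w₂ : κ → R) :
    ((weightedSumSquares R w₁).prod (weightedSumSquares R w₂)).IsometryEquiv
      (weightedSumSquares R (Sum.elim w₁ w₂)) where
  __ := (LinearEquiv.sumArrowLequivProdArrow ι κ R R).symm
  map_app' := fun ⟨x, y⟩ => by simp [Fintype.sum_sum_type]

end QuadraticMap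

namespace QuadraticForm

variable {𝕜 M₁ M₂ : Type*} [Field 𝕜] [LinearOrder 𝕜] [IsStrictOrderedRing 𝕜]
  [AddCommGroup M₁] [Module 𝕜 M₁] [FiniteDimensional 𝕜 M₁]
  [AddCommGroup M₂] [Module 𝕜 M₂] [FiniteDimensional 𝕜 M₂]

theorem sigPos_prod (Q₁ : QuadraticForm 𝕜 M₁) (Q₂ : QuadraticForm 𝕜 M₂) :
    sigPos (Q₁.prod Q₂) = sigPos Q₁ + sigPos Q₂ := by
  have : Invertible (2 : 𝕜) := invertibleOfNonzero two_ne_zero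
  obtain ⟨w₁, h₁⟩ := Q₁.equivalent_weightedSumSquares
  obtain ⟨w₂, h₂⟩ := Q₂.equivalent_weightedSumSquares
  have h : (Q₁.prod Q₂).Equivalent (weightedSumSquares 𝕜 (Sum.elim w₁ w₂)) :=
    (h₁.prod h₂).trans ⟨isometryEquivProdWeightedSumSquares w₁ w₂⟩
  rw [h.sigPos_eq, h₁.sigPos_eq, h₂.sigPos_eq, sigPos_weightedSumSquares,
    sigPos_weightedSumSquares, sigPos_weightedSumSquares, Set.ncard_setOf_sum]
  rfl

theorem sigNeg_prod (Q₁ : QuadraticForm 𝕜 M₁) (Q₂ : QuadraticForm 𝕜 M₂) :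
    sigNeg (Q₁.prod Q₂) = sigNeg Q₁ + sigNeg Q₂ := by
  have h : (-Q₁).prod (-Q₂) = -(Q₁.prod Q₂) := by ext; simp [add_comm]
  rw [← sigPos_neg, ← sigPos_neg, ← sigPos_neg, ← h, sigPos_prod]

theorem sigPos_weightedSumSquares_two_neg_two :
    sigPos (weightedSumSquares 𝕜 ![(2 : 𝕜), -2]) = 1 := by
  rw [sigPos_weightedSumSquares, Set.ncard_eq_one]
  exact ⟨0, by ext i; fin_cases i <;> simp⟩

theorem sigNeg_weightedSumSquares_two_neg_two :
    sigNeg (weightedSumSquares 𝕜 ![(2 : 𝕜), -2]) = 1 := by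
  rw [sigNeg_weightedSumSquares, Set.ncard_eq_one]
  exact ⟨1, by ext i; fin_cases i <;> simp⟩

end QuadraticForm

namespace Matrix

variable {R n : Type*} [CommRing R] [Fintype n] [DecidableEq n]

theorem toQuadraticForm'_apply (M : Matrix n n R) (v : n → R) :
    M.toQuadraticForm' v = v ⬝ᵥ M *ᵥ v :=
  toLinearMap₂'_apply' M v v

theorem toQuadraticForm'_add_transpose_apply (M : Matrix n n R) (v : n → R) :
    (M + Mᵀ).toQuadraticForm' v = 2 * (v ⬝ᵥ M *ᵥ v) := by
  rw [toQuadraticForm'_apply, add_mulVec, dotProduct_add, mulVec_transpose,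
    dotProduct_comm v (v ᵥ* M), ← dotProduct_mulVec, two_mul]

theorem IsHermitian.toQuadraticForm'_equivalent {A : Matrix n n ℝ} (hA : A.IsHermitian) :
    A.toQuadraticForm'.Equivalent (weightedSumSquares ℝ hA.eigenvalues) := by
  set U : Matrix n n ℝ := (hA.eigenvectorUnitary : Matrix n n ℝ)
  have : Invertible (star U) := ⟨U, Unitary.coe_mul_star_self _, Unitary.coe_star_mul_self _⟩
  refine ⟨{ toLinearEquiv := toLinearEquiv' (star U) this, map_app' := fun x => ?_ }⟩
  have hU : x ᵥ* U = star U *ᵥ x := by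
    rw [star_eq_conjTranspose, conjTranspose_eq_transpose_of_trivial, mulVec_transpose]
  rw [toQuadraticForm'_apply]
  conv_rhs => rw [hA.spectral_theorem, Unitary.conjStarAlgAut_apply]
  rw [← mulVec_mulVec, ← mulVec_mulVec, dotProduct_mulVec]
  change _ = x ᵥ* U ⬝ᵥ diagonal hA.eigenvalues *ᵥ (star U *ᵥ x)
  rw [hU]
  simp [dotProduct, mulVec_diagonal, mul_left_comm]

end Matrix

theorem signature_eq_sigPos_sub_sigNeg {n : Type*} [Fintype n] [DecidableEq n]
    {A : Matrix n n ℝ} (hA : A.IsHermitian) :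
    signature A = sigPos A.toQuadraticForm' - sigNeg A.toQuadraticForm' := by
  have h := hA.toQuadraticForm'_equivalent
  rw [signature, dif_pos hA, h.sigPos_eq, h.sigNeg_eq, sigPos_weightedSumSquares,
    sigNeg_weightedSumSquares, Set.ncard_eq_toFinset_card', Set.ncard_eq_toFinset_card']
  simp

theorem isHermitian_map_add_transpose {n : Type*} (M : Matrix n n ℤ) :
    ((M + Mᵀ).map (Int.cast : ℤ → ℝ)).IsHermitian :=
  isHermitian_iff_isSymm.mpr ((isSymm_add_transpose_self M).map _)

def hyperbolicSplitting {𝕜 m : Type*} [Field 𝕜] [NeZero (2 : 𝕜)] [Fintype m] (c : m → 𝕜) :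
    ((m → 𝕜) × (Fin 2 → 𝕜)) ≃ₗ[𝕜] (m ⊕ Fin 2 → 𝕜) where
  toFun p := Sum.elim p.1 ![p.2 0 + p.2 1, p.2 0 - p.2 1 - c ⬝ᵥ p.1]
  invFun v := (v ∘ Sum.inl, ![(v (.inr 0) + v (.inr 1) + c ⬝ᵥ (v ∘ Sum.inl)) / 2,
    (v (.inr 0) - v (.inr 1) - c ⬝ᵥ (v ∘ Sum.inl)) / 2])
  map_add' p q := by
    ext (i | i)
    · rfl
    · fin_cases i <;>
        simp only [Prod.fst_add, Prod.snd_add, Pi.add_apply, dotProduct_add, Sum.elim_inr,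
          Fin.zero_eta, Fin.mk_one, Fin.isValue, cons_val_zero, cons_val_one, cons_val_fin_one] <;>
        ring
  map_smul' a p := by
    ext (i | i)
    · rfl
    · fin_cases i <;>
        simp only [Prod.smul_fst, Prod.smul_snd, Pi.smul_apply, smul_eq_mul, dotProduct_smul,
          RingHom.id_apply, Sum.elim_inr, Fin.zero_eta, Fin.mk_one, Fin.isValue, cons_val_zero,
          cons_val_one, cons_val_fin_one] <;>
        ring
  left_inv p := by
    ext i
    · rfl
    · fin_cases i <;>
        simp only [Sum.elim_comp_inl, Sum.elim_inr, Fin.zero_eta, Fin.mk_one, Fin.isValue,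
          cons_val_zero, cons_val_one, cons_val_fin_one] <;>
        field_simp <;> ring
  right_inv v := by
    ext (i | i)
    · rfl
    · fin_cases i <;>
        simp only [Sum.elim_inr, Fin.zero_eta, Fin.mk_one, Fin.isValue, cons_val_zero,
          cons_val_one, cons_val_fin_one] <;>
        field_simp <;> ring

section ColEnlarge

variable {n : ℕ} (V : Matrix (Fin n) (Fin n) ℤ) (b : Fin n → ℤ)

theorem sumElim_dotProduct_colEnlarge_mulVec {R : Type*} [CommRing R]
    (x : Fin n → R) (y : Fin 2 → R) :
    Sum.elim x y ⬝ᵥ (colEnlarge V b).map (Int.cast : ℤ → R) *ᵥ Sum.elim x y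
      = x ⬝ᵥ V.map (Int.cast : ℤ → R) *ᵥ x + y 0 * ((fun i => (b i : R)) ⬝ᵥ x + y 1) := by
  have hb : (of fun i (j : Fin 2) => if j = 0 then b i else 0).map (Int.cast : ℤ → R) *ᵥ y
      = y 0 • fun i => (b i : R) := by
    ext i
    simp [mulVec, dotProduct, mul_comm]
  have hN : y ⬝ᵥ (!![0, 1; 0, 0] : Matrix (Fin 2) (Fin 2) ℤ).map (Int.cast : ℤ → R) *ᵥ y
      = y 0 * y 1 := by
    simp [mulVec, dotProduct, Fin.sum_univ_two]
  rw [colEnlarge, fromBlocks_map, fromBlocks_mulVec, sumElim_dotProduct_sumElim,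
    Sum.elim_comp_inl, Sum.elim_comp_inr, hb, Matrix.map_zero _ Int.cast_zero, zero_mulVec,
    zero_add, hN, dotProduct_add, dotProduct_smul, smul_eq_mul,
    dotProduct_comm (fun i => (b i : R)) x]
  ring

theorem toQuadraticForm'_colEnlarge_add_transpose_apply {R : Type*} [CommRing R]
    (x : Fin n → R) (y : Fin 2 → R) :
    ((colEnlarge V b + (colEnlarge V b)ᵀ).map (Int.cast : ℤ → R)).toQuadraticForm' (Sum.elim x y)
      = ((V + Vᵀ).map (Int.cast : ℤ → R)).toQuadraticForm' x
        + 2 * y 0 * (y 1 + (fun i => (b i : R)) ⬝ᵥ x) := by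
  rw [Matrix.map_add _ Int.cast_add, Matrix.map_add _ Int.cast_add, transpose_map, transpose_map,
    toQuadraticForm'_add_transpose_apply, toQuadraticForm'_add_transpose_apply,
    sumElim_dotProduct_colEnlarge_mulVec]
  ring

theorem toQuadraticForm'_colEnlarge_add_transpose_equivalent (𝕜 : Type*) [Field 𝕜]
    [NeZero (2 : 𝕜)] :
    ((colEnlarge V b + (colEnlarge V b)ᵀ).map (Int.cast : ℤ → 𝕜)).toQuadraticForm'.Equivalent
      (((V + Vᵀ).map (Int.cast : ℤ → 𝕜)).toQuadraticForm'.prod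
        (weightedSumSquares 𝕜 ![(2 : 𝕜), -2])) := by
  refine ⟨QuadraticMap.IsometryEquiv.symm
    { toLinearEquiv := hyperbolicSplitting fun i => (b i : 𝕜)
      map_app' := fun ⟨x, u⟩ => ?_ }⟩
  change ((colEnlarge V b + (colEnlarge V b)ᵀ).map (Int.cast : ℤ → 𝕜)).toQuadraticForm'
    (Sum.elim x _) = _
  rw [toQuadraticForm'_colEnlarge_add_transpose_apply, QuadraticMap.prod_apply,
    weightedSumSquares_apply, Fin.sum_univ_two]
  simp only [Fin.isValue, cons_val_zero, cons_val_one, cons_val_fin_one, smul_eq_mul]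
  ring

end ColEnlarge

/-- For the column-type elementary enlargement `W` of `V`, the signatures of the (real)
symmetrizations agree: `σ(W + Wᵀ) = σ(V + Vᵀ)`. -/
theorem signature_colEnlarge {n : ℕ} (V : Matrix (Fin n) (Fin n) ℤ) (b : Fin n → ℤ) :
    signature ((colEnlarge V b + (colEnlarge V b)ᵀ).map (Int.cast : ℤ → ℝ))
      = signature ((V + Vᵀ).map (Int.cast : ℤ → ℝ)) := by
  have h := toQuadraticForm'_colEnlarge_add_transpose_equivalent V b ℝ
  rw [signature_eq_sigPos_sub_sigNeg (isHermitian_map_add_transpose _),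
    signature_eq_sigPos_sub_sigNeg (isHermitian_map_add_transpose _), h.sigPos_eq, h.sigNeg_eq,
    sigPos_prod, sigNeg_prod, sigPos_weightedSumSquares_two_neg_two,
    sigNeg_weightedSumSquares_two_neg_two]
  push_cast
  ring
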